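/- arXiv:1503.03056 — 3 statements merged into one kernel-verified Lean document; each statement's English description precedes it below -/
import Mathlib

section
/- Let $u, v, w \in \mathbb{R}^7$ be orthonormal with $\varphi_0(u,v,w) = 0$. Then the 3-plane spanned by $u \times v$, $v \times w$, $w \times u$ is associative: these three vectors are orthonormal and $\varphi_0(u \times v, v \times w, w \times u) = -1$ or $+1$ (in particular $|\varphi_0(u\times v, v\times w, w\times u)| = 1$). -/
noncomputable section
open scoped RealInnerProductSpace

abbrev R7 : Type := EuclideanSpace ℝ (Fin 7)

/-- standard basis vector -/
def e (k : Fin 7) : R7 := EuclideanSpace.single k 1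

/-- `e^{ijk}(u,v,w)` -/
def tri (i j k : Fin 7) (u v w : R7) : ℝ :=
  Matrix.det !![u i, u j, u k; v i, v j, v k; w i, w j, w k]

/-- the standard `G₂` 3-form `φ₀` (indices shifted to 0-based) -/
def phi0 (u v w : R7) : ℝ :=
  tri 0 1 2 u v w + tri 0 3 4 u v w + tri 0 5 6 u v w + tri 1 3 5 u v w
    - tri 1 4 6 u v w - tri 2 3 6 u v w - tri 2 4 5 u v w

/-- `e^{ijkl}(u,v,w,z)` -/
def quad (i j k l : Fin 7) (u v w z : R7) : ℝ :=
  Matrix.det !![u i, u j, u k, u l; v i, v j, v k, v l;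
    w i, w j, w k, w l; z i, z j, z k, z l]

/-- the 4-form `⋆φ₀` -/
def starphi0 (u v w z : R7) : ℝ :=
  quad 3 4 5 6 u v w z + quad 1 2 5 6 u v w z + quad 1 2 3 4 u v w z
    + quad 0 2 4 6 u v w z - quad 0 2 3 5 u v w z - quad 0 1 4 5 u v w z
    - quad 0 1 3 6 u v w z

/-- the cross product: `⟪u × v, w⟫ = φ₀(u,v,w)` -/
def cross (u v : R7) : R7 :=
  (WithLp.equiv 2 (Fin 7 → ℝ)).symm fun k => phi0 u v (e k)

/-- the associator `χ`: `⟪χ(u,v,w), z⟫ = ⋆φ₀(u,v,w,z)` -/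
def chi (u v w : R7) : R7 :=
  (WithLp.equiv 2 (Fin 7 → ℝ)).symm fun k => starphi0 u v w (e k)

/-- the coassociator `σ` -/
def sigma (a b c d : R7) : R7 :=
  ⟪b, cross c d⟫ • a + ⟪c, cross a d⟫ • b + ⟪a, cross b d⟫ • c + ⟪b, cross a c⟫ • d

/-- Gram determinant `|u ∧ v ∧ w|²` -/
def gram3 (u v w : R7) : ℝ :=
  Matrix.det !![⟪u,u⟫, ⟪u,v⟫, ⟪u,w⟫; ⟪v,u⟫, ⟪v,v⟫, ⟪v,w⟫; ⟪w,u⟫, ⟪w,v⟫, ⟪w,w⟫]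

/-- Gram determinant `|u ∧ v ∧ w ∧ z|²` -/
def gram4 (u v w z : R7) : ℝ :=
  Matrix.det !![⟪u,u⟫, ⟪u,v⟫, ⟪u,w⟫, ⟪u,z⟫;
    ⟪v,u⟫, ⟪v,v⟫, ⟪v,w⟫, ⟪v,z⟫;
    ⟪w,u⟫, ⟪w,v⟫, ⟪w,w⟫, ⟪w,z⟫;
    ⟪z,u⟫, ⟪z,v⟫, ⟪z,w⟫, ⟪z,z⟫]


lemma cross_apply_0 (a b : R7) : cross a b 0 = a 1*b 2 - a 2*b 1 + a 3*b 4 - a 4*b 3 + a 5*b 6 - a 6*b 5 := by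
  simp (config := { decide := true }) [cross, phi0, tri, e, Matrix.det_fin_three,
    EuclideanSpace.single_apply]
  ring

lemma cross_apply_1 (a b : R7) : cross a b 1 = - a 0*b 2 + a 2*b 0 + a 3*b 5 - a 4*b 6 - a 5*b 3 + a 6*b 4 := by
  simp (config := { decide := true }) [cross, phi0, tri, e, Matrix.det_fin_three,
    EuclideanSpace.single_apply]
  ring

lemma cross_apply_2 (a b : R7) : cross a b 2 = a 0*b 1 - a 1*b 0 - a 3*b 6 - a 4*b 5 + a 5*b 4 + a 6*b 3 := by
  simp (config := { decide := true }) [cross, phi0, tri, e, Matrix.det_fin_three,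
    EuclideanSpace.single_apply]
  ring

lemma cross_apply_3 (a b : R7) : cross a b 3 = - a 0*b 4 - a 1*b 5 + a 2*b 6 + a 4*b 0 + a 5*b 1 - a 6*b 2 := by
  simp (config := { decide := true }) [cross, phi0, tri, e, Matrix.det_fin_three,
    EuclideanSpace.single_apply]
  ring

lemma cross_apply_4 (a b : R7) : cross a b 4 = a 0*b 3 + a 1*b 6 + a 2*b 5 - a 3*b 0 - a 5*b 2 - a 6*b 1 := by
  simp (config := { decide := true }) [cross, phi0, tri, e, Matrix.det_fin_three,
    EuclideanSpace.single_apply]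
  ring

lemma cross_apply_5 (a b : R7) : cross a b 5 = - a 0*b 6 + a 1*b 3 - a 2*b 4 - a 3*b 1 + a 4*b 2 + a 6*b 0 := by
  simp (config := { decide := true }) [cross, phi0, tri, e, Matrix.det_fin_three,
    EuclideanSpace.single_apply]
  ring

lemma cross_apply_6 (a b : R7) : cross a b 6 = a 0*b 5 - a 1*b 4 - a 2*b 3 + a 3*b 2 + a 4*b 1 - a 5*b 0 := by
  simp (config := { decide := true }) [cross, phi0, tri, e, Matrix.det_fin_three,
    EuclideanSpace.single_apply]
  ring

lemma phi0_expand (a b c : R7) : phi0 a b c = a 0*b 1*c 2 - a 0*b 2*c 1 + a 0*b 3*c 4 - a 0*b 4*c 3 + a 0*b 5*c 6 - a 0*b 6*c 5 - a 1*b 0*c 2 + a 1*b 2*c 0 + a 1*b 3*c 5 - a 1*b 4*c 6 - a 1*b 5*c 3 + a 1*b 6*c 4 + a 2*b 0*c 1 - a 2*b 1*c 0 - a 2*b 3*c 6 - a 2*b 4*c 5 + a 2*b 5*c 4 + a 2*b 6*c 3 - a 3*b 0*c 4 - a 3*b 1*c 5 + a 3*b 2*c 6 + a 3*b 4*c 0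 + a 3*b 5*c 1 - a 3*b 6*c 2 + a 4*b 0*c 3 + a 4*b 1*c 6 + a 4*b 2*c 5 - a 4*b 3*c 0 - a 4*b 5*c 2 - a 4*b 6*c 1 - a 5*b 0*c 6 + a 5*b 1*c 3 - a 5*b 2*c 4 - a 5*b 3*c 1 + a 5*b 4*c 2 + a 5*b 6*c 0 + a 6*b 0*c 5 - a 6*b 1*c 4 - a 6*b 2*c 3 + a 6*b 3*c 2 + a 6*b 4*c 1 - a 6*b 5*c 0 := by
  simp [phi0, tri, Matrix.det_fin_three]
  ring

lemma inner_expand (a b : R7) : ⟪a, b⟫ = a 0*b 0 + a 1*b 1 + a 2*b 2 + a 3*b 3 + a 4*b 4 + a 5*b 5 + a 6*b 6 := by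
  simp [PiLp.inner_apply, Fin.sum_univ_seven]
  ring

lemma inner_cross_self (a b : R7) : ⟪cross a b, cross a b⟫ = ⟪a,a⟫*⟪b,b⟫ - ⟪a,b⟫^2 := by
  simp only [inner_expand, cross_apply_0, cross_apply_1, cross_apply_2, cross_apply_3,
    cross_apply_4, cross_apply_5, cross_apply_6]
  ring

lemma inner_cross_adj (a b c : R7) : ⟪cross a b, cross b c⟫ = ⟪a,b⟫*⟪b,c⟫ - ⟪a,c⟫*⟪b,b⟫ := by
  simp only [inner_expand, cross_apply_0, cross_apply_1, cross_apply_2, cross_apply_3,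
    cross_apply_4, cross_apply_5, cross_apply_6]
  ring

set_option maxHeartbeats 4000000 in
lemma phi0_cross_cross (a b c : R7) :
    phi0 (cross a b) (cross b c) (cross c a) =
      2*(phi0 a b c)^2 - ⟪a,a⟫*⟪b,b⟫*⟪c,c⟫ + ⟪a,a⟫*⟪b,c⟫^2 + ⟪b,b⟫*⟪a,c⟫^2
        + ⟪c,c⟫*⟪a,b⟫^2 - 2*⟪a,b⟫*⟪b,c⟫*⟪a,c⟫ := by
  simp only [phi0_expand, inner_expand, cross_apply_0, cross_apply_1, cross_apply_2,
    cross_apply_3, cross_apply_4, cross_apply_5, cross_apply_6]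
  ring

theorem stmt9 (u v w : R7) (hu : ‖u‖ = 1) (hv : ‖v‖ = 1) (hw : ‖w‖ = 1)
    (huv : ⟪u, v⟫ = 0) (hvw : ⟪v, w⟫ = 0) (huw : ⟪u, w⟫ = 0)
    (hphi : phi0 u v w = 0) :
    Orthonormal ℝ ![cross u v, cross v w, cross w u] ∧
      |phi0 (cross u v) (cross v w) (cross w u)| = 1 := by
  have hu' : ⟪u,u⟫ = 1 := by rw [real_inner_self_eq_norm_mul_norm, hu]; norm_num
  have hv' : ⟪v,v⟫ = 1 := by rw [real_inner_self_eq_norm_mul_norm, hv]; norm_num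
  have hw' : ⟪w,w⟫ = 1 := by rw [real_inner_self_eq_norm_mul_norm, hw]; norm_num
  have hvu : ⟪v,u⟫ = 0 := by rw [real_inner_comm]; exact huv
  have hwv : ⟪w,v⟫ = 0 := by rw [real_inner_comm]; exact hvw
  have hwu : ⟪w,u⟫ = 0 := by rw [real_inner_comm]; exact huw
  have o00 : ⟪cross u v, cross u v⟫ = (1:ℝ) := by
    rw [inner_cross_self, hu', hv', huv]; ring
  have o11 : ⟪cross v w, cross v w⟫ = (1:ℝ) := by
    rw [inner_cross_self, hv', hw', hvw]; ring
  have o22 : ⟪cross w u, cross w u⟫ = (1:ℝ) := by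
    rw [inner_cross_self, hw', hu', hwu]; ring
  have o01 : ⟪cross u v, cross v w⟫ = (0:ℝ) := by
    rw [inner_cross_adj, huv, hvw, huw, hv']; ring
  have o12 : ⟪cross v w, cross w u⟫ = (0:ℝ) := by
    rw [inner_cross_adj, hvw, hwu, hvu, hw']; ring
  have o20 : ⟪cross w u, cross u v⟫ = (0:ℝ) := by
    rw [inner_cross_adj, hwu, huv, hwv, hu']; ring
  have o10 : ⟪cross v w, cross u v⟫ = (0:ℝ) := by rw [real_inner_comm]; exact o01
  have o21 : ⟪cross w u, cross v w⟫ = (0:ℝ) := by rw [real_inner_comm]; exact o12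
  have o02 : ⟪cross u v, cross w u⟫ = (0:ℝ) := by rw [real_inner_comm]; exact o20
  constructor
  · rw [orthonormal_iff_ite]
    intro i j
    fin_cases i <;> fin_cases j
    exacts [o00, o01, o02, o10, o11, o12, o20, o21, o22]
  · rw [phi0_cross_cross u v w, hphi, hu', hv', hw', huv, hvw, huw]
    norm_num
end
end

section
/- Let $u, v, w \in \mathbb{R}^7$ be orthonormal with $\varphi_0(u, v, w) = 0$, and let $\tilde{S} = \sigma(u, v, u \times v, w)$, where $\sigma(a,b,c,d) = \langle b, c \times d \rangle a + \langle c, a \times d \rangle b + \langle a, b \times d \rangle c + \langle b, a \times c \rangle d$. Then $\tilde{S}$ is a unit vector orthogonal to $u$, $v$, and $u \times v$. -/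
noncomputable section
open scoped RealInnerProductSpace

lemma c0 (u v : R7) : cross u v 0 = u 1 * v 2 - u 2 * v 1 + u 3 * v 4 - u 4 * v 3 + u 5 * v 6 - u 6 * v 5 := by
  simp [cross, phi0, tri, e, EuclideanSpace.single_apply, Matrix.det_fin_three]; ring
lemma c1 (u v : R7) : cross u v 1 = -u 0 * v 2 + u 2 * v 0 + u 3 * v 5 - u 5 * v 3 - u 4 * v 6 + u 6 * v 4 := by
  simp [cross, phi0, tri, e, EuclideanSpace.single_apply, Matrix.det_fin_three]; ring
lemma c2 (u v : R7) : cross u v 2 = u 0 * v 1 - u 1 * v 0 - u 3 * v 6 + u 6 * v 3 - u 4 * v 5 + u 5 * v 4 := by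
  simp [cross, phi0, tri, e, EuclideanSpace.single_apply, Matrix.det_fin_three]; ring
lemma c3 (u v : R7) : cross u v 3 = -u 0 * v 4 + u 4 * v 0 - u 1 * v 5 + u 5 * v 1 + u 2 * v 6 - u 6 * v 2 := by
  simp [cross, phi0, tri, e, EuclideanSpace.single_apply, Matrix.det_fin_three]; ring
lemma c4 (u v : R7) : cross u v 4 = u 0 * v 3 - u 3 * v 0 + u 1 * v 6 - u 6 * v 1 + u 2 * v 5 - u 5 * v 2 := by
  simp [cross, phi0, tri, e, EuclideanSpace.single_apply, Matrix.det_fin_three]; ring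
lemma c5 (u v : R7) : cross u v 5 = -u 0 * v 6 + u 6 * v 0 + u 1 * v 3 - u 3 * v 1 - u 2 * v 4 + u 4 * v 2 := by
  simp [cross, phi0, tri, e, EuclideanSpace.single_apply, Matrix.det_fin_three]; ring
lemma c6 (u v : R7) : cross u v 6 = u 0 * v 5 - u 5 * v 0 - u 1 * v 4 + u 4 * v 1 - u 2 * v 3 + u 3 * v 2 := by
  simp [cross, phi0, tri, e, EuclideanSpace.single_apply, Matrix.det_fin_three]; ring


lemma inner7 (x y : R7) : ⟪x, y⟫ = x 0 * y 0 + x 1 * y 1 + x 2 * y 2 + x 3 * y 3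
    + x 4 * y 4 + x 5 * y 5 + x 6 * y 6 := by
  simp [PiLp.inner_apply, RCLike.inner_apply, Fin.sum_univ_seven]; ring

set_option maxHeartbeats 1600000 in
lemma lemA (u v w : R7) : ⟪v, cross (cross u v) w⟫ = ⟪v,v⟫ * ⟪u,w⟫ - ⟪u,v⟫ * ⟪v,w⟫ := by
  simp only [inner7, c0, c1, c2, c3, c4, c5, c6]; ring

set_option maxHeartbeats 1600000 in
lemma lemB (u v w : R7) : ⟪cross u v, cross u w⟫ = ⟪u,u⟫ * ⟪v,w⟫ - ⟪u,v⟫ * ⟪u,w⟫ := by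
  simp only [inner7, c0, c1, c2, c3, c4, c5, c6]; ring

set_option maxHeartbeats 1600000 in
lemma lemC (u v w : R7) : ⟪u, cross v w⟫ = phi0 u v w := by
  simp only [inner7, c0, c1, c2, c3, c4, c5, c6, phi0, tri, Matrix.det_fin_three]
  norm_num [Matrix.cons_val_zero, Matrix.cons_val_one, Matrix.head_cons, Matrix.cons_val_two, Matrix.tail_cons]
  ring

set_option maxHeartbeats 1600000 in
lemma lemD (u v : R7) : ⟪v, cross u (cross u v)⟫ = ⟪u,v⟫ * ⟪u,v⟫ - ⟪u,u⟫ * ⟪v,v⟫ := by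
  simp only [inner7, c0, c1, c2, c3, c4, c5, c6]; ring

set_option maxHeartbeats 1600000 in
lemma phi0_cyc (u v w : R7) : phi0 w u v = phi0 u v w := by
  simp only [phi0, tri, Matrix.det_fin_three]
  norm_num [Matrix.cons_val_zero, Matrix.cons_val_one, Matrix.head_cons, Matrix.cons_val_two, Matrix.tail_cons]
  ring

theorem stmt14 (u v w : R7) (hu : ‖u‖ = 1) (hv : ‖v‖ = 1) (hw : ‖w‖ = 1)
    (huv : ⟪u, v⟫ = 0) (hvw : ⟪v, w⟫ = 0) (huw : ⟪u, w⟫ = 0)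
    (hphi : phi0 u v w = 0) :
    ‖sigma u v (cross u v) w‖ = 1 ∧ ⟪sigma u v (cross u v) w, u⟫ = 0 ∧
      ⟪sigma u v (cross u v) w, v⟫ = 0 ∧
      ⟪sigma u v (cross u v) w, cross u v⟫ = 0 := by
  have huu : ⟪u,u⟫ = (1:ℝ) := by
    rw [real_inner_self_eq_norm_mul_norm, hu]; norm_num
  have hvv : ⟪v,v⟫ = (1:ℝ) := by
    rw [real_inner_self_eq_norm_mul_norm, hv]; norm_num
  have hS : sigma u v (cross u v) w = -w := by
    unfold sigma
    rw [lemA u v w, lemB u v w, lemC u v w, lemD u v, huu, hvv, huv, hvw, huw, hphi]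
    module
  have hwc : ⟪w, cross u v⟫ = 0 := by rw [lemC w u v, phi0_cyc, hphi]
  rw [hS]
  refine ⟨by rw [norm_neg, hw], ?_, ?_, ?_⟩
  · rw [inner_neg_left, real_inner_comm, huw]; norm_num
  · rw [inner_neg_left, real_inner_comm, hvw]; norm_num
  · rw [inner_neg_left, hwc]; norm_num
end
end

section
/- Let $u, v \in \mathbb{R}^7$ be orthonormal, let $w$ be a unit vector orthogonal to $u$, $v$, and $u \times v$, and set $\tilde{S} = \sigma(u, v, u \times v, w)$. Then $\{u, v, u \times v, \tilde{S}, u \times \tilde{S}, v \times \tilde{S}, (u \times v) \times \tilde{S}\}$ is an orthonormal basis of $\mathbb{R}^7$. -/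
noncomputable section
open scoped RealInnerProductSpace

/- ### auxiliary lemmas -/

lemma crossApp (a b : R7) (k : Fin 7) : cross a b k = phi0 a b (e k) := rfl

set_option maxHeartbeats 1000000 in
lemma cross0 (a b : R7) : cross a b 0 =
    (a 1*b 2 - a 2*b 1) + (a 3*b 4 - a 4*b 3) + (a 5*b 6 - a 6*b 5) := by
  simp [crossApp, phi0, tri, e, Matrix.det_fin_three, EuclideanSpace.single_apply] <;> ring

set_option maxHeartbeats 1000000 in
lemma cross1 (a b : R7) : cross a b 1 =
    -(a 0*b 2 - a 2*b 0) + (a 3*b 5 - a 5*b 3) - (a 4*b 6 - a 6*b 4) := by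
  simp [crossApp, phi0, tri, e, Matrix.det_fin_three, EuclideanSpace.single_apply] <;> ring

set_option maxHeartbeats 1000000 in
lemma cross2 (a b : R7) : cross a b 2 =
    (a 0*b 1 - a 1*b 0) - (a 3*b 6 - a 6*b 3) - (a 4*b 5 - a 5*b 4) := by
  simp [crossApp, phi0, tri, e, Matrix.det_fin_three, EuclideanSpace.single_apply] <;> ring

set_option maxHeartbeats 1000000 in
lemma cross3 (a b : R7) : cross a b 3 =
    -(a 0*b 4 - a 4*b 0) - (a 1*b 5 - a 5*b 1) + (a 2*b 6 - a 6*b 2) := by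
  simp [crossApp, phi0, tri, e, Matrix.det_fin_three, EuclideanSpace.single_apply] <;> ring

set_option maxHeartbeats 1000000 in
lemma cross4 (a b : R7) : cross a b 4 =
    (a 0*b 3 - a 3*b 0) + (a 1*b 6 - a 6*b 1) + (a 2*b 5 - a 5*b 2) := by
  simp [crossApp, phi0, tri, e, Matrix.det_fin_three, EuclideanSpace.single_apply] <;> ring

set_option maxHeartbeats 1000000 in
lemma cross5 (a b : R7) : cross a b 5 =
    -(a 0*b 6 - a 6*b 0) + (a 1*b 3 - a 3*b 1) - (a 2*b 4 - a 4*b 2) := by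
  simp [crossApp, phi0, tri, e, Matrix.det_fin_three, EuclideanSpace.single_apply] <;> ring

set_option maxHeartbeats 1000000 in
lemma cross6 (a b : R7) : cross a b 6 =
    (a 0*b 5 - a 5*b 0) - (a 1*b 4 - a 4*b 1) - (a 2*b 3 - a 3*b 2) := by
  simp [crossApp, phi0, tri, e, Matrix.det_fin_three, EuclideanSpace.single_apply] <;> ring

lemma ip7 (x y : R7) : ⟪x, y⟫ = x 0*y 0 + x 1*y 1 + x 2*y 2 + x 3*y 3
    + x 4*y 4 + x 5*y 5 + x 6*y 6 := by
  simp [PiLp.inner_apply, RCLike.inner_apply, Fin.sum_univ_seven]; ring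

lemma L1 (a b : R7) : ⟪a, cross a b⟫ = 0 := by
  simp only [ip7, cross0, cross1, cross2, cross3, cross4, cross5, cross6]; ring

lemma L2 (a b : R7) : ⟪b, cross a b⟫ = 0 := by
  simp only [ip7, cross0, cross1, cross2, cross3, cross4, cross5, cross6]; ring

set_option maxHeartbeats 1000000 in
lemma L3 (a b c : R7) : ⟪cross a b, cross a c⟫ = ⟪a,a⟫*⟪b,c⟫ - ⟪a,b⟫*⟪a,c⟫ := by
  simp only [ip7, cross0, cross1, cross2, cross3, cross4, cross5, cross6]; ring

set_option maxHeartbeats 1000000 in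
lemma L4 (a b c : R7) : ⟪cross a c, cross b c⟫ = ⟪a,b⟫*⟪c,c⟫ - ⟪a,c⟫*⟪b,c⟫ := by
  simp only [ip7, cross0, cross1, cross2, cross3, cross4, cross5, cross6]; ring

lemma T (a b c : R7) : ⟪cross a b, c⟫ = ⟪a, cross b c⟫ := by
  simp only [ip7, cross0, cross1, cross2, cross3, cross4, cross5, cross6]; ring

set_option maxHeartbeats 1000000 in
lemma L8s (a b c : R7) : ⟪cross a (cross a b), c⟫ = ⟪a,b⟫*⟪a,c⟫ - ⟪a,a⟫*⟪b,c⟫ := by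
  simp only [ip7, cross0, cross1, cross2, cross3, cross4, cross5, cross6]; ring

set_option maxHeartbeats 1000000 in
lemma L9s (a b c : R7) : ⟪cross b (cross a b), c⟫ = ⟪b,b⟫*⟪a,c⟫ - ⟪a,b⟫*⟪b,c⟫ := by
  simp only [ip7, cross0, cross1, cross2, cross3, cross4, cross5, cross6]; ring

set_option maxHeartbeats 1000000 in
lemma cross_swap (a b : R7) : cross a b = -cross b a := by
  ext k
  simp only [PiLp.neg_apply, crossApp]
  simp [phi0, tri, Matrix.det_fin_three] <;> ring

set_option maxHeartbeats 1000000 in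
lemma cross_neg_right (a b : R7) : cross a (-b) = -cross a b := by
  ext k
  simp only [PiLp.neg_apply, crossApp]
  simp [phi0, tri, Matrix.det_fin_three, PiLp.neg_apply] <;> ring

set_option maxHeartbeats 4000000 in
theorem stmt16 (u v w : R7) (hu : ‖u‖ = 1) (hv : ‖v‖ = 1) (hw : ‖w‖ = 1)
    (huv : ⟪u, v⟫ = 0) (hwu : ⟪w, u⟫ = 0) (hwv : ⟪w, v⟫ = 0)
    (hwc : ⟪w, cross u v⟫ = 0) :
    Orthonormal ℝ ![u, v, cross u v, sigma u v (cross u v) w,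
        cross u (sigma u v (cross u v) w), cross v (sigma u v (cross u v) w),
        cross (cross u v) (sigma u v (cross u v) w)] ∧
      Submodule.span ℝ
        (Set.range ![u, v, cross u v, sigma u v (cross u v) w,
          cross u (sigma u v (cross u v) w), cross v (sigma u v (cross u v) w),
          cross (cross u v) (sigma u v (cross u v) w)]) = ⊤ := by
  have huu : ⟪u,u⟫ = 1 := by rw [real_inner_self_eq_norm_sq, hu]; norm_num
  have hvv : ⟪v,v⟫ = 1 := by rw [real_inner_self_eq_norm_sq, hv]; norm_num
  have hww : ⟪w,w⟫ = 1 := by rw [real_inner_self_eq_norm_sq, hw]; norm_num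
  have huw : ⟪u,w⟫ = 0 := by rw [real_inner_comm]; exact hwu
  have hvw : ⟪v,w⟫ = 0 := by rw [real_inner_comm]; exact hwv
  have hPw : ⟪cross u v, w⟫ = 0 := by rw [real_inner_comm]; exact hwc
  -- sigma = -w
  have hc1 : ⟪v, cross (cross u v) w⟫ = 0 := by
    rw [← T, L9s, huw, hvw]; ring
  have hc2 : ⟪cross u v, cross u w⟫ = 0 := by rw [L3, huv, hvw]; ring
  have hc3 : ⟪u, cross v w⟫ = 0 := by rw [← T]; exact hPw
  have hc4 : ⟪v, cross u (cross u v)⟫ = 0 - 1 := by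
    rw [real_inner_comm, L8s, huv, huu, hvv]; ring
  have hS : sigma u v (cross u v) w = -w := by
    rw [sigma, hc1, hc2, hc3, hc4]; simp
  rw [hS, cross_neg_right, cross_neg_right, cross_neg_right]
  -- all pairwise inner products
  have hPP : ⟪cross u v, cross u v⟫ = 1 := by rw [L3, huu, hvv, huv]; ring
  have hXX : ⟪cross u w, cross u w⟫ = 1 := by rw [L3, huu, hww, huw]; ring
  have hYY : ⟪cross v w, cross v w⟫ = 1 := by rw [L3, hvv, hww, hvw]; ring
  have hZZ : ⟪cross (cross u v) w, cross (cross u v) w⟫ = 1 := by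
    rw [L3, hPP, hww, hPw]; ring
  have huP : ⟪u, cross u v⟫ = 0 := L1 u v
  have hvP : ⟪v, cross u v⟫ = 0 := L2 u v
  have huX : ⟪u, cross u w⟫ = 0 := L1 u w
  have hvX : ⟪v, cross u w⟫ = 0 := by
    rw [← T, cross_swap v u, inner_neg_left, hPw]; ring
  have huY : ⟪u, cross v w⟫ = 0 := hc3
  have hvY : ⟪v, cross v w⟫ = 0 := L1 v w
  have hwX : ⟪w, cross u w⟫ = 0 := L2 u w
  have hwY : ⟪w, cross v w⟫ = 0 := L2 v w
  have hwZ : ⟪w, cross (cross u v) w⟫ = 0 := L2 (cross u v) w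
  have huZ : ⟪u, cross (cross u v) w⟫ = 0 := by
    rw [← T, L8s, huv, huw, huu, hvw]; ring
  have hvZ : ⟪v, cross (cross u v) w⟫ = 0 := hc1
  have hPX : ⟪cross u v, cross u w⟫ = 0 := hc2
  have hPY : ⟪cross u v, cross v w⟫ = 0 := by
    rw [cross_swap u v, inner_neg_left, L3, huw, hvw]; ring
  have hPZ : ⟪cross u v, cross (cross u v) w⟫ = 0 := L1 (cross u v) w
  have hXY : ⟪cross u w, cross v w⟫ = 0 := by rw [L4, huv, hww, huw, hvw]; ring
  have hXZ : ⟪cross u w, cross (cross u v) w⟫ = 0 := by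
    rw [L4, huP, hww, huw, hPw]; ring
  have hYZ : ⟪cross v w, cross (cross u v) w⟫ = 0 := by
    rw [L4, hvP, hww, hvw, hPw]; ring
  have huw' : ⟪u, w⟫ = 0 := huw
  have sy : ∀ x y : R7, ⟪x,y⟫ = 0 → ⟪y,x⟫ = 0 := fun x y h => by
    rw [real_inner_comm]; exact h
  have r1 := sy _ _ huv
  have r2 := sy _ _ huw
  have r3 := sy _ _ hvw
  have r4 := sy _ _ hPw
  have r5 := sy _ _ huP
  have r6 := sy _ _ hvP
  have r7 := sy _ _ huX
  have r8 := sy _ _ hvX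
  have r9 := sy _ _ huY
  have r10 := sy _ _ hvY
  have r11 := sy _ _ hwX
  have r12 := sy _ _ hwY
  have r13 := sy _ _ hwZ
  have r14 := sy _ _ huZ
  have r15 := sy _ _ hvZ
  have r16 := sy _ _ hPX
  have r17 := sy _ _ hPY
  have r18 := sy _ _ hPZ
  have r19 := sy _ _ hXY
  have r20 := sy _ _ hXZ
  have r21 := sy _ _ hYZ
  have r22 := sy _ _ hwc
  have orth : Orthonormal ℝ ![u, v, cross u v, -w, -cross u w, -cross v w,
      -cross (cross u v) w] := by
    rw [orthonormal_iff_ite]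
    intro i j
    fin_cases i <;> fin_cases j <;>
      norm_num [Matrix.cons_val_succ, -PiLp.inner_apply, -inner_self_eq_norm_sq_to_K, Fin.ext_iff,
        huu, hvv, hww, huv, huw, hvw, hPw, hPP, hXX, hYY, hZZ, huP, hvP, huX, hvX,
        huY, hvY, hwX, hwY, hwZ, huZ, hvZ, hPX, hPY, hPZ, hXY, hXZ, hYZ, hwu, hwv, hwc,
        r1, r2, r3, r4, r5, r6, r7, r8, r9, r10, r11, r12, r13, r14, r15, r16, r17,
        r18, r19, r20, r21, r22]
  refine ⟨orth, ?_⟩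
  exact orth.linearIndependent.span_eq_top_of_card_eq_finrank
    (by simp [finrank_euclideanSpace_fin])
end
end
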